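/- arXiv:1005.5152 — 4 statements merged into one kernel-verified Lean document; each statement's English description precedes it below -/
import Mathlib

section
/- Let 𝒜 be an additive category and let u : X → Y, u' : X' → Y' be chain maps of cochain complexes over 𝒜, and f : X → X', g : Y → Y' chain maps admitting at least one good map Cone(u) → Cone(u') relative to (f,g). Suppose that for every chain map β : X⟦1⟧ → Y', the composite β ∘ w : Cone(u) → Y' is null-homotopic, where w : Cone(u) → X⟦1⟧ is the canonical projection. Then any two chain maps Cone(u) → Cone(u') that are good relative to (f, g) are chain homotopic. -/
/-!
Two maps good relative to `(f, g)` differ only in their lower-left entry, so `h₁ - h₂` factors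
as `Cone(u) ⟶ X⟦1⟧ ⟶ Y' ⟶ Cone(u')` through `w` and `v`, the middle map `β` being `α₁ - α₂`: the
chain-map conditions on `h₁` and `h₂` say that each `αᵢ` is, up to sign, a homotopy between
`u' ∘ f` and `g ∘ u`, so their difference commutes (up to the sign of the shift) with the
differentials. Since `β ∘ w` is null-homotopic, so is `h₁ - h₂`.
-/

open CategoryTheory Category Limits

namespace ForPaper

variable {𝒜 : Type*} [Category 𝒜] [Preadditive 𝒜] [HasBinaryBiproducts 𝒜]

/-- The mapping cone of a chain map `u : X ⟶ Y` of cochain complexes: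
`Cone(u)ⁿ = Xⁿ⁺¹ ⊞ Yⁿ` with differential `[[-d_X, 0], [u, d_Y]]`. -/
noncomputable def cone {X Y : CochainComplex 𝒜 ℤ} (u : X ⟶ Y) : CochainComplex 𝒜 ℤ :=
  CochainComplex.of (fun n => X.X (n + 1) ⊞ Y.X n)
    (fun n => biprod.desc (biprod.lift (-X.d (n + 1) (n + 1 + 1)) (u.f (n + 1)))
      (biprod.lift 0 (Y.d n (n + 1))))
    (fun n => by
      apply biprod.hom_ext' <;> apply biprod.hom_ext <;>
        simp [u.comm (n + 1) (n + 1 + 1)])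

@[simp]
lemma cone_d {X Y : CochainComplex 𝒜 ℤ} (u : X ⟶ Y) (n : ℤ) :
    (cone u).d n (n + 1) = biprod.desc
      (biprod.lift (-X.d (n + 1) (n + 1 + 1)) (u.f (n + 1)))
      (biprod.lift 0 (Y.d n (n + 1))) := by
  simp [cone]

/-- The canonical inclusion `Y ⟶ Cone(u)`. -/
noncomputable def coneIn {X Y : CochainComplex 𝒜 ℤ} (u : X ⟶ Y) : Y ⟶ cone u where
  f n := biprod.inr
  comm' := by
    rintro i j (rfl : i + 1 = j)
    apply biprod.hom_ext <;> simp [cone]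

/-- The canonical projection `Cone(u) ⟶ X⟦1⟧`. -/
noncomputable def coneOut {X Y : CochainComplex 𝒜 ℤ} (u : X ⟶ Y) :
    cone u ⟶ (X⟦(1 : ℤ)⟧) where
  f n := biprod.fst
  comm' := by
    rintro i j (rfl : i + 1 = j)
    apply biprod.hom_ext' <;> simp [cone]

/-- A chain map `h : Cone(u) ⟶ Cone(u')` is *good* relative to the pair `(f, g)` if
in each degree it is given by a matrix `[[f, 0], [α, g]]` for some family of
morphisms `α n : Xⁿ⁺¹ ⟶ Y'ⁿ`. -/
def IsGood {X Y X' Y' : CochainComplex 𝒜 ℤ} (u : X ⟶ Y) (u' : X' ⟶ Y')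
    (f : X ⟶ X') (g : Y ⟶ Y') (h : cone u ⟶ cone u') : Prop :=
  ∃ α : ∀ n : ℤ, X.X (n + 1) ⟶ Y'.X n,
    ∀ n : ℤ, h.f n =
      biprod.desc (biprod.lift (f.f (n + 1)) (α n)) (biprod.lift 0 (g.f n))

variable {X Y X' Y' : CochainComplex 𝒜 ℤ} {u : X ⟶ Y} {u' : X' ⟶ Y'} {f : X ⟶ X'} {g : Y ⟶ Y'}

-- the `Xⁿ⁺¹ ⟶ Y'ⁿ⁺¹` entry of the chain-map condition `h ≫ d = d ≫ h`
theorem homotopy_rel_of_f_eq_matrix {h : cone u ⟶ cone u'} {α : ∀ n : ℤ, X.X (n + 1) ⟶ Y'.X n}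
    (hα : ∀ n : ℤ, h.f n =
      biprod.desc (biprod.lift (f.f (n + 1)) (α n)) (biprod.lift 0 (g.f n))) (n : ℤ) :
    f.f (n + 1) ≫ u'.f (n + 1) + α n ≫ Y'.d n (n + 1) =
      -X.d (n + 1) (n + 1 + 1) ≫ α (n + 1) + u.f (n + 1) ≫ g.f (n + 1) := by
  have hcomm := biprod.inl ≫= h.comm n (n + 1) =≫ biprod.snd
  rw [hα n, hα (n + 1)] at hcomm
  simpa [cone] using hcomm

def shiftHomMk (β : ∀ n : ℤ, X.X (n + 1) ⟶ Y'.X n)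
    (hβ : ∀ n : ℤ, β n ≫ Y'.d n (n + 1) = -X.d (n + 1) (n + 1 + 1) ≫ β (n + 1)) :
    X⟦(1 : ℤ)⟧ ⟶ Y' where
  f := β
  comm' := by
    rintro i j (rfl : i + 1 = j)
    simpa [CochainComplex.shiftFunctor_obj_d'] using hβ i

theorem IsGood.sub_eq_coneOut_comp_comp_coneIn {h₁ h₂ : cone u ⟶ cone u'}
    (hh₁ : IsGood u u' f g h₁) (hh₂ : IsGood u u' f g h₂) :
    ∃ β : X⟦(1 : ℤ)⟧ ⟶ Y', h₁ - h₂ = coneOut u ≫ β ≫ coneIn u' := by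
  obtain ⟨α₁, hα₁⟩ := hh₁
  obtain ⟨α₂, hα₂⟩ := hh₂
  have hβ (n : ℤ) : (α₁ n - α₂ n) ≫ Y'.d n (n + 1) =
      -X.d (n + 1) (n + 1 + 1) ≫ (α₁ (n + 1) - α₂ (n + 1)) := by
    have := congrArg₂ (· - ·) (homotopy_rel_of_f_eq_matrix hα₁ n)
      (homotopy_rel_of_f_eq_matrix hα₂ n)
    rw [add_sub_add_left_eq_sub, add_sub_add_right_eq_sub] at this
    rw [Preadditive.sub_comp, Preadditive.comp_sub, this]
    abel
  refine ⟨shiftHomMk (fun n => α₁ n - α₂ n) hβ, ?_⟩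
  ext n : 1
  simp only [HomologicalComplex.sub_f_apply, HomologicalComplex.comp_f, hα₁ n, hα₂ n]
  dsimp [cone, CochainComplex.of, coneOut, coneIn, shiftHomMk]
  apply biprod.hom_ext' <;> apply biprod.hom_ext <;>
    (erw [Preadditive.comp_sub, Preadditive.sub_comp]; simp)

end ForPaper

open ForPaper

theorem statement_5_general {𝒜 : Type*} [Category 𝒜] [Preadditive 𝒜] [HasBinaryBiproducts 𝒜]
    {X Y X' Y' : CochainComplex 𝒜 ℤ} (u : X ⟶ Y) (u' : X' ⟶ Y')
    (f : X ⟶ X') (g : Y ⟶ Y')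
    (hvanish : ∀ β : (X⟦(1 : ℤ)⟧) ⟶ Y', Nonempty (Homotopy (coneOut u ≫ β) 0)) :
    ∀ h₁ h₂ : cone u ⟶ cone u', IsGood u u' f g h₁ → IsGood u u' f g h₂ →
      Nonempty (Homotopy h₁ h₂) := by
  intro h₁ h₂ hh₁ hh₂
  obtain ⟨β, hβ⟩ := hh₁.sub_eq_coneOut_comp_comp_coneIn hh₂
  obtain ⟨H⟩ := hvanish β
  refine ⟨Homotopy.equivSubZero.symm ?_⟩
  rw [hβ, ← Category.assoc, ← zero_comp (Y := Y') (Z := cone u') (f := coneIn u')]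
  exact H.compRight _

/-- If every composite `Cone(u) ⟶ X⟦1⟧ ⟶ Y'` with the canonical projection is
null-homotopic, then any two chain maps `Cone(u) ⟶ Cone(u')` which are good relative to
the same pair `(f, g)` (assumed to admit at least one good map) are chain homotopic. -/
theorem statement_5 {𝒜 : Type*} [Category 𝒜] [Preadditive 𝒜] [HasBinaryBiproducts 𝒜]
    {X Y X' Y' : CochainComplex 𝒜 ℤ} (u : X ⟶ Y) (u' : X' ⟶ Y')
    (f : X ⟶ X') (g : Y ⟶ Y')
    (hexists : ∃ h₀ : cone u ⟶ cone u', IsGood u u' f g h₀)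
    (hvanish : ∀ β : (X⟦(1 : ℤ)⟧) ⟶ Y', Nonempty (Homotopy (coneOut u ≫ β) 0)) :
    ∀ h₁ h₂ : cone u ⟶ cone u', IsGood u u' f g h₁ → IsGood u u' f g h₂ →
      Nonempty (Homotopy h₁ h₂) :=
  statement_5_general u u' f g hvanish
end

section
/- Let 𝒜 be an additive category and let u : X → Y, u' : X' → Y' be chain maps of cochain complexes over 𝒜, and f : X → X', g : Y → Y' chain maps. Suppose there exists a chain map φ : Y → X' such that f is chain homotopic to φ ∘ u and g is chain homotopic to u' ∘ φ. Then there exists a chain map h : Cone(u) → Cone(u') that is good relative to (f, g) and is null-homotopic. -/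
open CategoryTheory Category Limits

open ForPaper

/-!
With homotopies `K : f ≃ u ≫ φ` and `L : g ≃ φ ≫ u'`, the degree `-1` matrix
`s = [[-K, φ], [0, L]] : Cone(u) → Cone(u')` gives the null-homotopic map `h = d s + s d`.
The homotopy identities for `K` and `L`, together with `φ` being a chain map, show that the
matrix of `h` is `[[f, 0], [u L - K u', g]]`.
-/

open Preadditive

theorem Homotopy.comm_int_succ {𝒜 : Type*} [Category 𝒜] [Preadditive 𝒜]
    {C D : CochainComplex 𝒜 ℤ} {f₀ f₁ : C ⟶ D} (K : Homotopy f₀ f₁) (n : ℤ) :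
    f₀.f (n + 1) = C.d (n + 1) (n + 1 + 1) ≫ K.hom (n + 1 + 1) (n + 1) +
      K.hom (n + 1) n ≫ D.d n (n + 1) + f₁.f (n + 1) := by
  rw [K.comm (n + 1), dNext_eq K.hom (show (ComplexShape.up ℤ).Rel (n + 1) (n + 1 + 1) from rfl),
    prevD_eq K.hom (show (ComplexShape.up ℤ).Rel n (n + 1) from rfl)]

namespace ForPaper

variable {𝒜 : Type*} [Category 𝒜] [Preadditive 𝒜] [HasBinaryBiproducts 𝒜]
  {X Y X' Y' : CochainComplex 𝒜 ℤ} {u : X ⟶ Y} {u' : X' ⟶ Y'} {f : X ⟶ X'} {g : Y ⟶ Y'}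
  {φ : Y ⟶ X'}

noncomputable def coneNullHomotopy (K : Homotopy f (u ≫ φ)) (L : Homotopy g (φ ≫ u'))
    (n : ℤ) : (cone u).X (n + 1) ⟶ (cone u').X n :=
  biprod.desc (biprod.lift (-K.hom (n + 1 + 1) (n + 1)) 0)
    (biprod.lift (φ.f (n + 1)) (L.hom (n + 1) n))

noncomputable def coneMapOfHomotopies (K : Homotopy f (u ≫ φ)) (L : Homotopy g (φ ≫ u')) :
    cone u ⟶ cone u' :=
  Homotopy.nullHomotopicMap' fun i j (hij : j + 1 = i) => by
    subst hij
    exact coneNullHomotopy K L j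

lemma coneMapOfHomotopies_f_succ (K : Homotopy f (u ≫ φ)) (L : Homotopy g (φ ≫ u')) (n : ℤ) :
    (coneMapOfHomotopies K L).f (n + 1) =
      (cone u).d (n + 1) (n + 1 + 1) ≫ coneNullHomotopy K L (n + 1) +
        coneNullHomotopy K L n ≫ (cone u').d n (n + 1) :=
  Homotopy.nullHomotopicMap'_f (c := ComplexShape.up ℤ) rfl rfl _

theorem isGood_coneMapOfHomotopies (K : Homotopy f (u ≫ φ)) (L : Homotopy g (φ ≫ u')) :
    IsGood u u' f g (coneMapOfHomotopies K L) := by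
  refine ⟨fun n => u.f (n + 1) ≫ L.hom (n + 1) n - K.hom (n + 1) n ≫ u'.f n, fun n => ?_⟩
  obtain ⟨n, rfl⟩ : ∃ m, n = m + 1 := ⟨n - 1, by ring⟩
  have hK := K.comm_int_succ (n + 1)
  have hL := L.comm_int_succ n
  have hφ := φ.comm (n + 1) (n + 1 + 1)
  rw [coneMapOfHomotopies_f_succ, cone_d, cone_d, coneNullHomotopy, coneNullHomotopy]
  unfold cone
  apply biprod.hom_ext' <;> apply biprod.hom_ext <;>
    simp only [biprod.inl_desc_assoc, biprod.inr_desc_assoc, biprod.lift_desc, biprod.lift_fst,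
      biprod.lift_snd, add_comp, comp_add, neg_comp, comp_neg, assoc, biprod.inl_desc,
      biprod.inr_desc, zero_comp, comp_zero, HomologicalComplex.comp_f, hK, hL, ← hφ] <;>
    abel

end ForPaper

/-- If the square `(f, g)` is null-homotopic in the sense that there is a chain map
`φ : Y ⟶ X'` with `f` homotopic to `φ ∘ u` and `g` homotopic to `u' ∘ φ`, then there
is a good map `Cone(u) ⟶ Cone(u')` relative to `(f, g)` which is null-homotopic. -/
theorem statement_6 {𝒜 : Type*} [Category 𝒜] [Preadditive 𝒜] [HasBinaryBiproducts 𝒜]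
    {X Y X' Y' : CochainComplex 𝒜 ℤ} (u : X ⟶ Y) (u' : X' ⟶ Y')
    (f : X ⟶ X') (g : Y ⟶ Y') (φ : Y ⟶ X')
    (hf : Nonempty (Homotopy f (u ≫ φ))) (hg : Nonempty (Homotopy g (φ ≫ u'))) :
    ∃ h : cone u ⟶ cone u', IsGood u u' f g h ∧ Nonempty (Homotopy h 0) := by
  obtain ⟨K⟩ := hf
  obtain ⟨L⟩ := hg
  exact ⟨coneMapOfHomotopies K L, isGood_coneMapOfHomotopies K L,
    ⟨Homotopy.nullHomotopy' _⟩⟩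
end

section
/- Let 𝒜 be an additive category and let u : X → Y, u' : X' → Y' be chain maps of cochain complexes over 𝒜, and f : X → X', g : Y → Y' chain maps. Suppose some chain map h : Cone(u) → Cone(u') that is good relative to (f, g) is null-homotopic. Then there exists a chain map φ : Y → X' such that f is chain homotopic to φ ∘ u and g is chain homotopic to u' ∘ φ. -/
open CategoryTheory Category Limits

/-!
A null-homotopy `H` of `h` has, in each degree, a component `Yⁱ ⟶ X'ⁱ` of degree `0`; these
form `φ`. Reading `h = dH + Hd` entrywise: in the entry `Y ⟶ X'⟦1⟧`, where a good `h` vanishes,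
it says that `φ` is a chain map; in the entries `X⟦1⟧ ⟶ X'⟦1⟧` and `Y ⟶ Y'` it says that the
diagonal components of `H` are homotopies `f⟦1⟧ ≃ (u ≫ φ)⟦1⟧` and `g ≃ φ ≫ u'`.
-/

lemma Homotopy.comm_of_rel {V ι : Type*} [Category V] [Preadditive V] {c : ComplexShape ι}
    {K L : HomologicalComplex V c} {φ₁ φ₂ : K ⟶ L} (H : Homotopy φ₁ φ₂) {i j k : ι}
    (hji : c.Rel j i) (hik : c.Rel i k) :
    φ₁.f i = K.d i k ≫ H.hom k i + H.hom i j ≫ L.d j i + φ₂.f i := by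
  rw [H.comm i, dNext_eq _ hik, prevD_eq _ hji]

lemma HomotopyCategory.nonempty_homotopy_of_shift {C : Type*} [Category C] [Preadditive C]
    {K L : CochainComplex C ℤ} {φ₁ φ₂ : K ⟶ L} (n : ℤ) (H : Homotopy (φ₁⟦n⟧') (φ₂⟦n⟧')) :
    Nonempty (Homotopy φ₁ φ₂) := by
  refine ⟨HomotopyCategory.homotopyOfEq _ _ ?_⟩
  apply (shiftFunctor (HomotopyCategory C (.up ℤ)) n).map_injective
  rw [← cancel_epi (((HomotopyCategory.quotient C (.up ℤ)).commShiftIso n).hom.app K),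
    ← Functor.commShiftIso_hom_naturality, ← Functor.commShiftIso_hom_naturality,
    HomotopyCategory.eq_of_homotopy _ _ H]

namespace ForPaper

variable {𝒜 : Type*} [Category 𝒜] [Preadditive 𝒜] [HasBinaryBiproducts 𝒜]

namespace cone

variable {X Y : CochainComplex 𝒜 ℤ} (u : X ⟶ Y) (n : ℤ)

/- The biproduct injections and projections, typed through `(cone u).X n`: that object is only
definitionally `X.X (n + 1) ⊞ Y.X n`, and rewriting needs the two to agree syntactically. -/

noncomputable def inl : X.X (n + 1) ⟶ (cone u).X n := biprod.inl

noncomputable def inr : Y.X n ⟶ (cone u).X n := biprod.inr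

noncomputable def fst : (cone u).X n ⟶ X.X (n + 1) := biprod.fst

noncomputable def snd : (cone u).X n ⟶ Y.X n := biprod.snd

lemma total : fst u n ≫ inl u n + snd u n ≫ inr u n = 𝟙 _ := biprod.total

lemma comp_comp_eq {A B P Q : 𝒜} (a : A ⟶ (cone u).X n) (b : (cone u).X n ⟶ B)
    (x : P ⟶ A) (y : B ⟶ Q) :
    x ≫ (a ≫ b) ≫ y =
      (x ≫ a ≫ fst u n) ≫ (inl u n ≫ b ≫ y) + (x ≫ a ≫ snd u n) ≫ (inr u n ≫ b ≫ y) := by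
  conv_lhs => rw [← id_comp b, ← total]
  simp only [Preadditive.add_comp, Preadditive.comp_add, assoc]

@[simp]
lemma inl_d_fst (i j : ℤ) : inl u i ≫ (cone u).d i j ≫ fst u j = -X.d (i + 1) (j + 1) := by
  by_cases hij : i + 1 = j
  · subst hij
    rw [cone_d]
    exact (biprod.inl_desc_assoc _ _ _).trans (biprod.lift_fst _ _)
  · rw [(cone u).shape _ _ hij, X.shape _ _ (by simp; omega), zero_comp, comp_zero, neg_zero]

@[simp]
lemma inl_d_snd {i j : ℤ} (hij : i + 1 = j) :
    inl u i ≫ (cone u).d i j ≫ snd u j = (X.XIsoOfEq hij).hom ≫ u.f j := by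
  subst hij
  rw [cone_d, HomologicalComplex.XIsoOfEq_rfl, Iso.refl_hom, id_comp]
  exact (biprod.inl_desc_assoc _ _ _).trans (biprod.lift_snd _ _)

@[simp]
lemma inr_d_fst (i j : ℤ) : inr u i ≫ (cone u).d i j ≫ fst u j = 0 := by
  by_cases hij : i + 1 = j
  · subst hij
    rw [cone_d]
    exact (biprod.inr_desc_assoc _ _ _).trans (biprod.lift_fst _ _)
  · rw [(cone u).shape _ _ hij, zero_comp, comp_zero]

@[simp]
lemma inr_d_snd (i j : ℤ) : inr u i ≫ (cone u).d i j ≫ snd u j = Y.d i j := by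
  by_cases hij : i + 1 = j
  · subst hij
    rw [cone_d]
    exact (biprod.inr_desc_assoc _ _ _).trans (biprod.lift_snd _ _)
  · rw [(cone u).shape _ _ hij, Y.shape _ _ hij, zero_comp, comp_zero]

end cone

variable {X Y X' Y' : CochainComplex 𝒜 ℤ} {u : X ⟶ Y} {u' : X' ⟶ Y'} {f : X ⟶ X'} {g : Y ⟶ Y'}
  {h : cone u ⟶ cone u'}

lemma IsGood.inl_f_fst (hgood : IsGood u u' f g h) (i : ℤ) :
    cone.inl u i ≫ h.f i ≫ cone.fst u' i = f.f (i + 1) := by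
  obtain ⟨α, hα⟩ := hgood
  rw [hα]
  exact (biprod.inl_desc_assoc _ _ _).trans (biprod.lift_fst _ _)

lemma IsGood.inr_f_fst (hgood : IsGood u u' f g h) (i : ℤ) :
    cone.inr u i ≫ h.f i ≫ cone.fst u' i = 0 := by
  obtain ⟨α, hα⟩ := hgood
  rw [hα]
  exact (biprod.inr_desc_assoc _ _ _).trans (biprod.lift_fst _ _)

lemma IsGood.inr_f_snd (hgood : IsGood u u' f g h) (i : ℤ) :
    cone.inr u i ≫ h.f i ≫ cone.snd u' i = g.f i := by
  obtain ⟨α, hα⟩ := hgood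
  rw [hα]
  exact (biprod.inr_desc_assoc _ _ _).trans (biprod.lift_snd _ _)

lemma comp_f_comp_eq_of_homotopy (H : Homotopy h 0) {i j k : ℤ} (hji : j + 1 = i)
    (hik : i + 1 = k) {P Q : 𝒜} (x : P ⟶ (cone u).X i) (y : (cone u').X i ⟶ Q) :
    x ≫ h.f i ≫ y =
      (x ≫ (cone u).d i k ≫ cone.fst u k) ≫ (cone.inl u k ≫ H.hom k i ≫ y) +
      (x ≫ (cone u).d i k ≫ cone.snd u k) ≫ (cone.inr u k ≫ H.hom k i ≫ y) +
      ((x ≫ H.hom i j ≫ cone.fst u' j) ≫ (cone.inl u' j ≫ (cone u').d j i ≫ y) +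
      (x ≫ H.hom i j ≫ cone.snd u' j) ≫ (cone.inr u' j ≫ (cone u').d j i ≫ y)) := by
  rw [H.comm_of_rel hji hik, HomologicalComplex.zero_f, add_zero, Preadditive.add_comp,
    Preadditive.comp_add, cone.comp_comp_eq, cone.comp_comp_eq]

namespace IsGood

variable (hgood : IsGood u u' f g h) (H : Homotopy h 0)

noncomputable def liftShift : Y⟦(1 : ℤ)⟧ ⟶ X'⟦(1 : ℤ)⟧ where
  f i := cone.inr u (i + 1) ≫ H.hom (i + 1) i ≫ cone.fst u' i
  comm' := by
    rintro i _ rfl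
    have e := comp_f_comp_eq_of_homotopy H rfl rfl (cone.inr u (i + 1)) (cone.fst u' (i + 1))
    simp only [hgood.inr_f_fst, cone.inr_d_fst, cone.inr_d_snd, cone.inl_d_fst, zero_comp,
      zero_add, comp_zero, add_zero, Preadditive.comp_neg] at e
    simp only [CochainComplex.shiftFunctor_obj_d', CochainComplex.shiftFunctor_obj_X',
      Int.negOnePow_one, Units.neg_smul, one_smul, Preadditive.comp_neg, Preadditive.neg_comp,
      neg_inj]
    exact (add_neg_eq_zero.mp e.symm).symm

/- `φ` is built on `Y⟦1⟧`, where its components are those of `H` on the nose; defining it on `Y`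
directly would require transport along `i - 1 + 1 = i`. -/
noncomputable def lift : Y ⟶ X' :=
  (shiftFunctor (CochainComplex 𝒜 ℤ) (1 : ℤ)).preimage (liftShift hgood H)

lemma lift_f (i : ℤ) :
    (lift hgood H).f (i + 1) = cone.inr u (i + 1) ≫ H.hom (i + 1) i ≫ cone.fst u' i :=
  congrArg (fun φ : Y⟦(1 : ℤ)⟧ ⟶ X'⟦(1 : ℤ)⟧ => φ.f i)
    (Functor.map_preimage _ (liftShift hgood H))

noncomputable def homotopyLeftShift : Homotopy (f⟦(1 : ℤ)⟧') ((u ≫ lift hgood H)⟦(1 : ℤ)⟧') where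
  hom i j := cone.inl u i ≫ H.hom i j ≫ cone.fst u' j
  zero i j hij := by
    show cone.inl u i ≫ H.hom i j ≫ cone.fst u' j = 0
    rw [H.zero i j hij, zero_comp, comp_zero]
  comm i := by
    have e := comp_f_comp_eq_of_homotopy H (sub_add_cancel i 1) rfl (cone.inl u i) (cone.fst u' i)
    simp only [hgood.inl_f_fst, cone.inl_d_fst, cone.inl_d_snd u rfl, cone.inr_d_fst,
      HomologicalComplex.XIsoOfEq_rfl, Iso.refl_hom, id_comp, comp_zero, add_zero] at e
    rw [dNext_eq _ (show (ComplexShape.up ℤ).Rel i (i + 1) from rfl),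
      prevD_eq _ (show (ComplexShape.up ℤ).Rel (i - 1) i from sub_add_cancel i 1)]
    simp only [CochainComplex.shiftFunctor_obj_d', CochainComplex.shiftFunctor_obj_X',
      CochainComplex.shiftFunctor_map_f', HomologicalComplex.comp_f, lift_f,
      Int.negOnePow_one, Units.neg_smul, one_smul, e]
    abel

noncomputable def homotopyRight : Homotopy g (lift hgood H ≫ u') where
  hom i j := cone.inr u i ≫ H.hom i j ≫ cone.snd u' j
  zero i j hij := by rw [H.zero i j hij, zero_comp, comp_zero]
  comm i := by
    obtain ⟨j, rfl⟩ : ∃ j, i = j + 1 := ⟨i - 1, by omega⟩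
    have e := comp_f_comp_eq_of_homotopy H rfl rfl (cone.inr u (j + 1)) (cone.snd u' (j + 1))
    simp only [hgood.inr_f_snd, cone.inr_d_fst, cone.inr_d_snd, cone.inl_d_snd u' rfl,
      HomologicalComplex.XIsoOfEq_rfl, Iso.refl_hom, id_comp, zero_comp, zero_add] at e
    rw [dNext_eq _ (show (ComplexShape.up ℤ).Rel (j + 1) (j + 1 + 1) from rfl),
      prevD_eq _ (show (ComplexShape.up ℤ).Rel j (j + 1) from rfl), HomologicalComplex.comp_f,
      lift_f, e]
    abel

end IsGood

end ForPaper

open ForPaper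

/-- If some good map `Cone(u) ⟶ Cone(u')` relative to `(f, g)` is null-homotopic, then
the square `(f, g)` is null-homotopic: there is a chain map `φ : Y ⟶ X'` with `f`
homotopic to `φ ∘ u` and `g` homotopic to `u' ∘ φ`. -/
theorem statement_7 {𝒜 : Type*} [Category 𝒜] [Preadditive 𝒜] [HasBinaryBiproducts 𝒜]
    {X Y X' Y' : CochainComplex 𝒜 ℤ} (u : X ⟶ Y) (u' : X' ⟶ Y')
    (f : X ⟶ X') (g : Y ⟶ Y') (h : cone u ⟶ cone u')
    (hgood : IsGood u u' f g h) (hnull : Nonempty (Homotopy h 0)) :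
    ∃ φ : Y ⟶ X', Nonempty (Homotopy f (u ≫ φ)) ∧ Nonempty (Homotopy g (φ ≫ u')) := by
  obtain ⟨H⟩ := hnull
  exact ⟨hgood.lift H, HomotopyCategory.nonempty_homotopy_of_shift 1 (hgood.homotopyLeftShift H),
    ⟨hgood.homotopyRight H⟩⟩
end

section
/- Let 𝒜 be an additive category and let u : X → Y, u' : X' → Y' be chain maps of cochain complexes over 𝒜. Let g : Y → Y' and h : Cone(u) → Cone(u') be chain maps such that h ∘ v is chain homotopic to v' ∘ g, where v : Y → Cone(u) and v' : Y' → Cone(u') are the canonical inclusions. Then there exist chain maps f : X → X' and g' : Y → Y' with g' chain homotopic to g, and a chain map h' : Cone(u) → Cone(u') that is good relative to (f, g') and is chain homotopic to h. -/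
open CategoryTheory Category Limits

open ForPaper

/-!
Correct `h` by the null-homotopic map `dK + Kd`, where `K` is the given homotopy
`h ∘ v ≃ v' ∘ g` precomposed with the projection `Cone(u) → Y`. Since that projection is a
degreewise retraction of `v`, the corrected map `h'` satisfies `h' ∘ v = v' ∘ g` on the nose.
Then `Cone(u) → Cone(u') → X'[1]` vanishes on `Y`, so it factors through `Cone(u) → X[1]` as a
chain map `X[1] → X'[1]`, which is `f[1]` for a unique `f`; these two identities say that `h'`
is good relative to `(f, g)`.
-/

theorem Homotopy.exists_homotopic_with_comp_eq {𝒜 ι : Type*} [Category 𝒜] [Preadditive 𝒜]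
    {c : ComplexShape ι} {A B C : HomologicalComplex 𝒜 c} (i : A ⟶ B)
    (r : ∀ n, B.X n ⟶ A.X n) (hr : ∀ n, i.f n ≫ r n = 𝟙 _) (h : B ⟶ C) {φ : A ⟶ C}
    (k : Homotopy (i ≫ h) φ) : ∃ h' : B ⟶ C, Nonempty (Homotopy h' h) ∧ i ≫ h' = φ := by
  let K : ∀ a b, B.X a ⟶ C.X b := fun a b => -(r a ≫ k.hom a b)
  have hK : ∀ a b, ¬c.Rel b a → K a b = 0 := fun a b hab => by simp [K, k.zero a b hab]
  refine ⟨h + Homotopy.nullHomotopicMap K,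
    ⟨((Homotopy.refl h).add (Homotopy.nullHomotopy K hK)).trans (Homotopy.ofEq (add_zero h))⟩, ?_⟩
  have hiK : (fun a b => i.f a ≫ K a b) = -k.hom := by
    ext a b
    simp [K, reassoc_of% (hr a)]
  ext n
  rw [Preadditive.comp_add, Homotopy.comp_nullHomotopicMap, hiK, HomologicalComplex.add_f_apply,
    k.comm n]
  change _ + (dNext n (-k.hom) + prevD n (-k.hom)) = _
  rw [map_neg, map_neg]
  abel

lemma CategoryTheory.Limits.biprod.eq_desc_of_inr_comp_eq {𝒜 : Type*} [Category 𝒜]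
    [Preadditive 𝒜] [HasBinaryBiproducts 𝒜] {P Q P' Q' : 𝒜} {a : P ⊞ Q ⟶ P' ⊞ Q'}
    {f : P ⟶ P'} {g : Q ⟶ Q'} (hf : biprod.inl ≫ a ≫ biprod.fst = f)
    (hg : biprod.inr ≫ a = g ≫ biprod.inr) :
    a = biprod.desc (biprod.lift f (biprod.inl ≫ a ≫ biprod.snd)) (biprod.lift 0 g) := by
  ext <;> simp [← hf, reassoc_of% hg]

namespace ForPaper

variable {𝒜 : Type*} [Category 𝒜] [Preadditive 𝒜] [HasBinaryBiproducts 𝒜]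
  {X Y X' Y' : CochainComplex 𝒜 ℤ}

noncomputable def coneInl (u : X ⟶ Y) (n : ℤ) : (X⟦(1 : ℤ)⟧).X n ⟶ (cone u).X n := biprod.inl

lemma coneInl_comp_coneOut_f (u : X ⟶ Y) (n : ℤ) : coneInl u n ≫ (coneOut u).f n = 𝟙 _ :=
  biprod.inl_fst

lemma coneIn_f_comp_coneOut_f (u : X ⟶ Y) (n : ℤ) : (coneIn u).f n ≫ (coneOut u).f n = 0 :=
  biprod.inr_fst

lemma coneIn_comp_coneOut (u : X ⟶ Y) : coneIn u ≫ coneOut u = 0 := by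
  ext n
  exact coneIn_f_comp_coneOut_f u n

lemma cone_hom_ext {u : X ⟶ Y} {n : ℤ} {Z : 𝒜} {a b : (cone u).X n ⟶ Z}
    (hl : coneInl u n ≫ a = coneInl u n ≫ b) (hr : (coneIn u).f n ≫ a = (coneIn u).f n ≫ b) :
    a = b :=
  biprod.hom_ext' a b hl hr

lemma exists_coneOut_comp_eq {Z : CochainComplex 𝒜 ℤ} (u : X ⟶ Y) (ψ : cone u ⟶ Z)
    (hψ : coneIn u ≫ ψ = 0) : ∃ φ : X⟦(1 : ℤ)⟧ ⟶ Z, coneOut u ≫ φ = ψ := by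
  have hψ_f (n : ℤ) : (coneOut u).f n ≫ coneInl u n ≫ ψ.f n = ψ.f n := by
    apply cone_hom_ext
    · rw [reassoc_of% coneInl_comp_coneOut_f]
    · rw [reassoc_of% coneIn_f_comp_coneOut_f, zero_comp, ← HomologicalComplex.comp_f, hψ,
        HomologicalComplex.zero_f]
  refine ⟨{ f := fun n => coneInl u n ≫ ψ.f n, comm' := ?_ }, ?_⟩
  · rintro n _ rfl
    calc (coneInl u n ≫ ψ.f n) ≫ Z.d n (n + 1)
        = coneInl u n ≫ (cone u).d n (n + 1) ≫ ψ.f (n + 1) := by rw [assoc, ψ.comm]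
      _ = coneInl u n ≫ (cone u).d n (n + 1) ≫ (coneOut u).f (n + 1) ≫
            coneInl u (n + 1) ≫ ψ.f (n + 1) := by rw [hψ_f]
      _ = (X⟦(1 : ℤ)⟧).d n (n + 1) ≫ coneInl u (n + 1) ≫ ψ.f (n + 1) := by
        rw [← HomologicalComplex.Hom.comm_assoc, reassoc_of% coneInl_comp_coneOut_f]
  · ext n
    exact hψ_f n

lemma isGood_of_comm (u : X ⟶ Y) (u' : X' ⟶ Y') {f : X ⟶ X'} {g : Y ⟶ Y'}
    {h : cone u ⟶ cone u'} (hg : coneIn u ≫ h = g ≫ coneIn u')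
    (hf : h ≫ coneOut u' = coneOut u ≫ f⟦(1 : ℤ)⟧') : IsGood u u' f g h := by
  refine ⟨fun n => biprod.inl ≫ h.f n ≫ biprod.snd, fun n => ?_⟩
  have hf_n : coneInl u n ≫ h.f n ≫ (coneOut u').f n = f.f (n + 1) := by
    have := coneInl u n ≫= HomologicalComplex.congr_hom hf n
    rwa [HomologicalComplex.comp_f, HomologicalComplex.comp_f,
      reassoc_of% coneInl_comp_coneOut_f] at this
  exact biprod.eq_desc_of_inr_comp_eq hf_n (HomologicalComplex.congr_hom hg n)

end ForPaper

/-- Given chain maps `g : Y ⟶ Y'` and `h : Cone(u) ⟶ Cone(u')` such that `h ∘ v` is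
homotopic to `v' ∘ g` (where `v`, `v'` are the canonical inclusions), there are chain
maps `f : X ⟶ X'` and `g' : Y ⟶ Y'` with `g'` homotopic to `g`, and a chain map
`h' : Cone(u) ⟶ Cone(u')`, homotopic to `h`, which is good relative to `(f, g')`. -/
theorem statement_8 {𝒜 : Type*} [Category 𝒜] [Preadditive 𝒜] [HasBinaryBiproducts 𝒜]
    {X Y X' Y' : CochainComplex 𝒜 ℤ} (u : X ⟶ Y) (u' : X' ⟶ Y')
    (g : Y ⟶ Y') (h : cone u ⟶ cone u')
    (hcomm : Nonempty (Homotopy (coneIn u ≫ h) (g ≫ coneIn u'))) :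
    ∃ (f : X ⟶ X') (g' : Y ⟶ Y') (h' : cone u ⟶ cone u'),
      Nonempty (Homotopy g' g) ∧ IsGood u u' f g' h' ∧ Nonempty (Homotopy h' h) := by
  obtain ⟨k⟩ := hcomm
  obtain ⟨h', hh', hg⟩ := Homotopy.exists_homotopic_with_comp_eq (coneIn u) (fun _ => biprod.snd)
    (fun _ => biprod.inr_snd) h k
  obtain ⟨φ, hφ⟩ := exists_coneOut_comp_eq u (h' ≫ coneOut u')
    (by rw [reassoc_of% hg, coneIn_comp_coneOut, comp_zero])
  refine ⟨(shiftFunctor _ (1 : ℤ)).preimage φ, g, h', ⟨Homotopy.refl g⟩,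
    isGood_of_comm u u' hg ?_, hh'⟩
  rw [Functor.map_preimage, hφ]
end
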